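/- arXiv:2211.04059 — 2 statements merged into one kernel-verified Lean document; each statement's English description precedes it below -/
import Mathlib

section
/- Let Λ < 0 and let a(t) = cos(√|Λ|·t), b(t) = 1/√|Λ| be the pancake solution on I = (−π/(2√|Λ|), π/(2√|Λ|)). Then the Kretschmann expression K(t) := 8·b''(t)²/b(t)² + 4·b'(t)⁴/b(t)⁴ + 8·a'(t)²·b'(t)²/(a(t)²·b(t)²) + 8·b'(t)²/b(t)⁴ + 4/b(t)⁴ + 4·a''(t)²/a(t)² is constant on I and equals 8Λ². In particular the Kretschmann expression of the pancake solution remains bounded. -/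
/-!
Since `b` is constant, every term of the Kretschmann expression containing `b'` or `b''`
vanishes, leaving `4/b⁴ + 4(a''/a)²`. For `a(t) = cos(s t)` with `s = √|Λ|` one has
`a'' = -s² a`, so on `I`, where `a > 0`, this is `4 s⁴ + 4 s⁴ = 8 Λ²`.
-/

open Real Set

noncomputable def kretschmann (a b : ℝ → ℝ) (t : ℝ) : ℝ :=
  8 * (deriv (deriv b) t) ^ 2 / (b t) ^ 2
  + 4 * (deriv b t) ^ 4 / (b t) ^ 4
  + 8 * (deriv a t) ^ 2 * (deriv b t) ^ 2 / ((a t) ^ 2 * (b t) ^ 2)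
  + 8 * (deriv b t) ^ 2 / (b t) ^ 4
  + 4 / (b t) ^ 4
  + 4 * (deriv (deriv a) t) ^ 2 / (a t) ^ 2

theorem kretschmann_const_right (a : ℝ → ℝ) (c t : ℝ) :
    kretschmann a (fun _ => c) t = 4 / c ^ 4 + 4 * (deriv (deriv a) t) ^ 2 / (a t) ^ 2 := by
  simp [kretschmann]

theorem deriv_deriv_cos_mul (s t : ℝ) :
    deriv (deriv fun t => cos (s * t)) t = -(s ^ 2 * cos (s * t)) := by
  have hderiv : (deriv fun t => cos (s * t)) = fun t => s * -sin (s * t) := by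
    funext t
    rw [deriv_comp_mul_left, Real.deriv_cos', smul_eq_mul]
  rw [hderiv, deriv_const_mul_field, deriv.fun_neg, deriv_comp_mul_left, Real.deriv_sin, smul_eq_mul]
  ring

theorem kretschmann_cos_mul_const {s t : ℝ} (hs : s ≠ 0) (ht : cos (s * t) ≠ 0) :
    kretschmann (fun t => cos (s * t)) (fun _ => 1 / s) t = 8 * s ^ 4 := by
  rw [kretschmann_const_right, deriv_deriv_cos_mul]
  field_simp
  ring

theorem cos_mul_pos_of_mem_Ioo {s t : ℝ} (hs : 0 < s)
    (ht : t ∈ Ioo (-(π / (2 * s))) (π / (2 * s))) : 0 < cos (s * t) := by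
  apply cos_pos_of_mem_Ioo
  have hπ : s * (π / (2 * s)) = π / 2 := by field_simp
  constructor <;> nlinarith [ht.1, ht.2]

/-- For the pancake solution `a(t) = cos(√|Λ|·t)`, `b(t) = 1/√|Λ|` with `Λ < 0`, the
Kretschmann expression
`K = 8(b'')²/b² + 4(b')⁴/b⁴ + 8(a')²(b')²/(a²b²) + 8(b')²/b⁴ + 4/b⁴ + 4(a'')²/a²`
is constant on `I = (−π/(2√|Λ|), π/(2√|Λ|))` and equals `8Λ²`; in particular it is
bounded on `I`. -/
theorem pancake_kretschmann_bounded (Λ : ℝ) (hΛ : Λ < 0)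
    (a b K : ℝ → ℝ)
    (ha : a = fun t => Real.cos (Real.sqrt |Λ| * t))
    (hb : b = fun _ => 1 / Real.sqrt |Λ|)
    (hK : K = fun t =>
      8 * (deriv (deriv b) t) ^ 2 / (b t) ^ 2
      + 4 * (deriv b t) ^ 4 / (b t) ^ 4
      + 8 * (deriv a t) ^ 2 * (deriv b t) ^ 2 / ((a t) ^ 2 * (b t) ^ 2)
      + 8 * (deriv b t) ^ 2 / (b t) ^ 4
      + 4 / (b t) ^ 4
      + 4 * (deriv (deriv a) t) ^ 2 / (a t) ^ 2) :
    (∀ t ∈ Set.Ioo (-(π / (2 * Real.sqrt |Λ|))) (π / (2 * Real.sqrt |Λ|)),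
        K t = 8 * Λ ^ 2) ∧
    (∃ M : ℝ, ∀ t ∈ Set.Ioo (-(π / (2 * Real.sqrt |Λ|))) (π / (2 * Real.sqrt |Λ|)),
        |K t| ≤ M) := by
  have hs : 0 < √|Λ| := sqrt_pos.mpr (abs_pos.mpr hΛ.ne)
  have hs4 : √|Λ| ^ 4 = Λ ^ 2 := by
    rw [show √|Λ| ^ 4 = (√|Λ| ^ 2) ^ 2 by ring, sq_sqrt (abs_nonneg Λ), sq_abs]
  have hconst : ∀ t ∈ Ioo (-(π / (2 * √|Λ|))) (π / (2 * √|Λ|)), K t = 8 * Λ ^ 2 := by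
    intro t ht
    have hK' : K = kretschmann a b := hK
    rw [hK', ha, hb, kretschmann_cos_mul_const hs.ne' (cos_mul_pos_of_mem_Ioo hs ht).ne', hs4]
  refine ⟨hconst, 8 * Λ ^ 2, fun t ht => ?_⟩
  rw [hconst t ht, abs_of_nonneg (by positivity)]
end

section
/- Let Λ < 0, ε ∈ ℝ, and let a, b be positive twice differentiable functions and φ a twice differentiable function on an interval I satisfying the evolution equations b'' = −(b')²/b − |Λ|b − ε/b − a'b'/a, a'' = −|Λ|a − 2a'b'/b, together with the wave equation φ'' = −(a'/a + 2b'/b)·φ'. Define C_φ(t) := |Λ| + ε/b(t)² + b'(t)²/b(t)² + 2·b'(t)a'(t)/(b(t)a(t)) − 4π·φ'(t)². Then C_φ'(t) = −2·(a'(t)/a(t) + 2·b'(t)/b(t))·C_φ(t) for all t ∈ I. In particular, if the scalar-field Hamiltonian constraint 4π(φ')² = |Λ| + ε/b² + (b')²/b² + 2b'a'/(ba) holds at one point of I, it holds on all of I. -/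
open Real Set

/-!
Both the geometric part `|Λ| + ε/b² + (b')²/b² + 2b'a'/(ba)` and the kinetic part
`4π(φ')²` of the constraint obey the same linear equation `f' = -2 (a'/a + 2b'/b) f`,
i.e. both scale like `(a² b⁴)⁻¹`. Hence so does their difference `C_φ`, and `C_φ · a² b⁴`
is constant on the interval; as `a² b⁴ > 0`, `C_φ` vanishes everywhere once it vanishes
somewhere.
-/

theorem IsOpen.eqOn_zero_of_hasDerivAt_of_integratingFactor {s : Set ℝ} (hs : IsOpen s)
    (hs' : IsPreconnected s) {f c w : ℝ → ℝ} (hf : ∀ t ∈ s, HasDerivAt f (c t * f t) t)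
    (hw : ∀ t ∈ s, HasDerivAt w (-c t * w t) t) (hw0 : ∀ t ∈ s, w t ≠ 0) {t₀ : ℝ}
    (ht₀ : t₀ ∈ s) (hf₀ : f t₀ = 0) : EqOn f 0 s := by
  have hfw : ∀ t ∈ s, HasDerivAt (fun u => f u * w u) 0 t := fun t ht =>
    ((hf t ht).mul (hw t ht)).congr_deriv (by ring)
  intro t ht
  have hconst : f t * w t = f t₀ * w t₀ :=
    hs.is_const_of_deriv_eq_zero hs'
      (fun u hu => (hfw u hu).differentiableAt.differentiableWithinAt)
      (fun u hu => (hfw u hu).deriv) ht ht₀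
  rw [hf₀, zero_mul] at hconst
  exact (mul_eq_zero.mp hconst).resolve_right (hw0 t ht)

section ScalarFieldConstraint

variable {Λ ε t : ℝ} {a b φ : ℝ → ℝ}

theorem hasDerivAt_sq_mul_pow_four {a' b' : ℝ} (ha : HasDerivAt a a' t) (hb : HasDerivAt b b' t)
    (ha0 : a t ≠ 0) (hb0 : b t ≠ 0) :
    HasDerivAt (fun s => a s ^ 2 * b s ^ 4)
      (2 * (a' / a t + 2 * b' / b t) * (a t ^ 2 * b t ^ 4)) t :=
  ((ha.pow 2).mul (hb.pow 4)).congr_deriv (by simp only [Pi.pow_apply]; field_simp; ring)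

theorem hasDerivAt_geometric_constraint (ha : HasDerivAt a (deriv a t) t)
    (hb : HasDerivAt b (deriv b t) t)
    (ha'' : HasDerivAt (deriv a) (-|Λ| * a t - 2 * deriv a t * deriv b t / b t) t)
    (hb'' : HasDerivAt (deriv b)
      (-(deriv b t) ^ 2 / b t - |Λ| * b t - ε / b t - deriv a t * deriv b t / a t) t)
    (ha0 : a t ≠ 0) (hb0 : b t ≠ 0) :
    HasDerivAt (fun s => |Λ| + ε / (b s) ^ 2 + (deriv b s) ^ 2 / (b s) ^ 2
        + 2 * deriv b s * deriv a s / (b s * a s))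
      (-2 * (deriv a t / a t + 2 * deriv b t / b t) * (|Λ| + ε / (b t) ^ 2
        + (deriv b t) ^ 2 / (b t) ^ 2 + 2 * deriv b t * deriv a t / (b t * a t))) t := by
  have hε := (hasDerivAt_const t ε).div (hb.pow 2) (pow_ne_zero 2 hb0)
  have hb'sq := (hb''.pow 2).div (hb.pow 2) (pow_ne_zero 2 hb0)
  have hmix := ((hb''.const_mul 2).mul ha'').div (hb.mul ha) (mul_ne_zero hb0 ha0)
  refine (((hε.const_add |Λ|).add hb'sq).add hmix).congr_deriv ?_
  simp only [Pi.mul_apply, Pi.pow_apply]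
  field_simp
  ring

theorem hasDerivAt_kinetic_constraint
    (hφ'' : HasDerivAt (deriv φ) (-(deriv a t / a t + 2 * deriv b t / b t) * deriv φ t) t) :
    HasDerivAt (fun s => 4 * π * (deriv φ s) ^ 2)
      (-2 * (deriv a t / a t + 2 * deriv b t / b t) * (4 * π * (deriv φ t) ^ 2)) t :=
  ((hφ''.pow 2).const_mul (4 * π)).congr_deriv (by ring)

end ScalarFieldConstraint

theorem scalar_field_constraint_propagation_general (Λ : ℝ) (ε α β : ℝ)
    (a b φ Cφ : ℝ → ℝ)
    (hpos : ∀ t ∈ Set.Ioo α β, 0 < a t ∧ 0 < b t)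
    (ha : ∀ t ∈ Set.Ioo α β, HasDerivAt a (deriv a t) t)
    (hb : ∀ t ∈ Set.Ioo α β, HasDerivAt b (deriv b t) t)
    (ha'' : ∀ t ∈ Set.Ioo α β, HasDerivAt (deriv a)
      (-|Λ| * a t - 2 * deriv a t * deriv b t / b t) t)
    (hb'' : ∀ t ∈ Set.Ioo α β, HasDerivAt (deriv b)
      (-(deriv b t) ^ 2 / b t - |Λ| * b t - ε / b t - deriv a t * deriv b t / a t) t)
    (hφ'' : ∀ t ∈ Set.Ioo α β, HasDerivAt (deriv φ)
      (-(deriv a t / a t + 2 * deriv b t / b t) * deriv φ t) t)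
    (hC : Cφ = fun t => |Λ| + ε / (b t) ^ 2 + (deriv b t) ^ 2 / (b t) ^ 2
      + 2 * deriv b t * deriv a t / (b t * a t) - 4 * π * (deriv φ t) ^ 2) :
    (∀ t ∈ Set.Ioo α β, HasDerivAt Cφ
      (-2 * (deriv a t / a t + 2 * deriv b t / b t) * Cφ t) t) ∧
    (∀ t₀ ∈ Set.Ioo α β,
      4 * π * (deriv φ t₀) ^ 2 = |Λ| + ε / (b t₀) ^ 2 + (deriv b t₀) ^ 2 / (b t₀) ^ 2
        + 2 * deriv b t₀ * deriv a t₀ / (b t₀ * a t₀) →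
      ∀ t ∈ Set.Ioo α β,
        4 * π * (deriv φ t) ^ 2 = |Λ| + ε / (b t) ^ 2 + (deriv b t) ^ 2 / (b t) ^ 2
          + 2 * deriv b t * deriv a t / (b t * a t)) := by
  have hrate : ∀ t ∈ Ioo α β,
      HasDerivAt Cφ (-2 * (deriv a t / a t + 2 * deriv b t / b t) * Cφ t) t := fun t ht => by
    subst hC
    exact (hasDerivAt_geometric_constraint (ha t ht) (hb t ht) (ha'' t ht) (hb'' t ht)
      (hpos t ht).1.ne' (hpos t ht).2.ne').sub (hasDerivAt_kinetic_constraint (hφ'' t ht))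
      |>.congr_deriv (mul_sub _ _ _).symm
  refine ⟨hrate, fun t₀ ht₀ hcon t ht => ?_⟩
  have hweight : ∀ t ∈ Ioo α β, HasDerivAt (fun s => a s ^ 2 * b s ^ 4)
      (-(-2 * (deriv a t / a t + 2 * deriv b t / b t)) * (a t ^ 2 * b t ^ 4)) t := fun t ht =>
    (hasDerivAt_sq_mul_pow_four (ha t ht) (hb t ht) (hpos t ht).1.ne'
      (hpos t ht).2.ne').congr_deriv (by ring)
  have hC₀ : Cφ t₀ = 0 := by rw [hC]; exact sub_eq_zero.mpr hcon.symm
  have hCt : Cφ t = 0 :=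
    isOpen_Ioo.eqOn_zero_of_hasDerivAt_of_integratingFactor isPreconnected_Ioo hrate hweight
      (fun t ht => by obtain ⟨ha0, hb0⟩ := hpos t ht; positivity) ht₀ hC₀ ht
  rw [hC] at hCt
  exact (sub_eq_zero.mp hCt).symm

/-- Propagation of the scalar-field Hamiltonian constraint: for positive twice
differentiable `a, b` and a twice differentiable scalar field `φ` on `(α, β)` satisfying the
evolution equations with `Λ < 0`, `ε`, and the wave equation `φ'' = −(a'/a + 2b'/b)φ'`, the
quantity `C_φ = |Λ| + ε/b² + (b')²/b² + 2b'a'/(ba) − 4π(φ')²` satisfies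
`C_φ' = −2(a'/a + 2b'/b)·C_φ`; in particular if the constraint
`4π(φ')² = |Λ| + ε/b² + (b')²/b² + 2b'a'/(ba)` holds at one point it holds everywhere. -/
theorem scalar_field_constraint_propagation (Λ : ℝ) (hΛ : Λ < 0) (ε α β : ℝ)
    (a b φ Cφ : ℝ → ℝ)
    (hpos : ∀ t ∈ Set.Ioo α β, 0 < a t ∧ 0 < b t)
    (ha : ∀ t ∈ Set.Ioo α β, HasDerivAt a (deriv a t) t)
    (hb : ∀ t ∈ Set.Ioo α β, HasDerivAt b (deriv b t) t)
    (hφ : ∀ t ∈ Set.Ioo α β, HasDerivAt φ (deriv φ t) t)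
    (ha'' : ∀ t ∈ Set.Ioo α β, HasDerivAt (deriv a)
      (-|Λ| * a t - 2 * deriv a t * deriv b t / b t) t)
    (hb'' : ∀ t ∈ Set.Ioo α β, HasDerivAt (deriv b)
      (-(deriv b t) ^ 2 / b t - |Λ| * b t - ε / b t - deriv a t * deriv b t / a t) t)
    (hφ'' : ∀ t ∈ Set.Ioo α β, HasDerivAt (deriv φ)
      (-(deriv a t / a t + 2 * deriv b t / b t) * deriv φ t) t)
    (hC : Cφ = fun t => |Λ| + ε / (b t) ^ 2 + (deriv b t) ^ 2 / (b t) ^ 2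
      + 2 * deriv b t * deriv a t / (b t * a t) - 4 * π * (deriv φ t) ^ 2) :
    (∀ t ∈ Set.Ioo α β, HasDerivAt Cφ
      (-2 * (deriv a t / a t + 2 * deriv b t / b t) * Cφ t) t) ∧
    (∀ t₀ ∈ Set.Ioo α β,
      4 * π * (deriv φ t₀) ^ 2 = |Λ| + ε / (b t₀) ^ 2 + (deriv b t₀) ^ 2 / (b t₀) ^ 2
        + 2 * deriv b t₀ * deriv a t₀ / (b t₀ * a t₀) →
      ∀ t ∈ Set.Ioo α β,
        4 * π * (deriv φ t) ^ 2 = |Λ| + ε / (b t) ^ 2 + (deriv b t) ^ 2 / (b t) ^ 2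
          + 2 * deriv b t * deriv a t / (b t * a t)) :=
  scalar_field_constraint_propagation_general Λ ε α β a b φ Cφ hpos ha hb ha'' hb'' hφ'' hC
end
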